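/- arXiv:1204.0414 — 5 statements merged into one kernel-verified Lean document; each statement's English description precedes it below -/
import Mathlib

section
/- A matrix M ∈ 𝓜^C_{l,n} is dead (i.e., M ∈ 𝓓(X)) if and only if for every pair (i,j) with 0 ≤ i < l and 0 ≤ j < n such that M(i,j) = 1, one has x^i_j < y^{R(M)}_j. -/
/-!
If some `M i₀ j₀ = 1` and some nonzero row `i₁` (with `M i₁ j₁ = 1`, necessarily `j₁ ≠ j₀`)
has `y i₁ j₀ ≤ x i₀ j₀`, a three-segment staircase path escapes: push coordinate `j₀` up to the
floor of the only hole in its column, then coordinate `j₁` through the hole of row `i₁`, which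
is open only below `y i₁ j₀`, then everything to `1`.

Conversely, if `x i j < y^{R(M)}_j` for every entry `M i j = 1`, a path in `X_M` can never
reach the level `y^{R(M)}_j` in any coordinate `j`: while it stays below all these levels,
avoiding the extended hole of column `j` forces its `j`-th coordinate to stay `≤ x i j`, so the
set of such times is both open and closed in `[0, 1]`; it contains `0`, but not `1`.
-/

open Set

/-- A directed path in `Y ⊆ ℝⁿ`: a continuous map from the unit interval, all of whose
coordinate functions are monotone nondecreasing, with values in `Y`. -/
def IsDiPath (n : ℕ) (Y : Set (Fin n → ℝ)) (p : unitInterval → Fin n → ℝ) : Prop :=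
  Continuous p ∧ (∀ t, p t ∈ Y) ∧ ∀ j : Fin n, Monotone fun t => p t j

/-- A total directed path goes from `(0,…,0)` to `(1,…,1)`. -/
def IsTotalDiPath (n : ℕ) (Y : Set (Fin n → ℝ)) (p : unitInterval → Fin n → ℝ) : Prop :=
  IsDiPath n Y p ∧ p 0 = (fun _ => (0:ℝ)) ∧ p 1 = (fun _ => (1:ℝ))

/-- The unit cube `[0,1]^n`. -/
def cube (n : ℕ) : Set (Fin n → ℝ) := {z | ∀ j, z j ∈ Icc (0:ℝ) 1}

/-- `M` has no zero row. -/
def NoZeroRow {l n : ℕ} (M : Fin l → Fin n → Bool) : Prop := ∀ i, ∃ j, M i j = true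

/-- Every column of `M` contains exactly one `1`. -/
def ColUnit {l n : ℕ} (M : Fin l → Fin n → Bool) : Prop := ∀ j, ∃! i, M i j = true

/-- Entrywise order on boolean matrices. -/
def matLE {l n : ℕ} (M N : Fin l → Fin n → Bool) : Prop := ∀ i j, M i j = true → N i j = true

/-- The extended hole `R̃^i_j = ∏_{j'<j} [0,y^i_{j'}) × (x^i_j, y^i_j) × ∏_{j'>j} [0,y^i_{j'})`. -/
def extHole {l n : ℕ} (x y : Fin l → Fin n → ℝ) (i : Fin l) (j : Fin n) : Set (Fin n → ℝ) :=
  {z | z j ∈ Ioo (x i j) (y i j) ∧ ∀ j', j' ≠ j → z j' ∈ Ico (0:ℝ) (y i j')}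

/-- `X_M = [0,1]^n \ ⋃_{(i,j) : M(i,j)=1} R̃^i_j`. -/
def XM {l n : ℕ} (x y : Fin l → Fin n → ℝ) (M : Fin l → Fin n → Bool) : Set (Fin n → ℝ) :=
  cube n \ ⋃ (i : Fin l) (j : Fin n) (_ : M i j = true), extHole x y i j

/-- `M` is dead if `X_M` contains no total directed path. -/
def Dead {l n : ℕ} (x y : Fin l → Fin n → ℝ) (M : Fin l → Fin n → Bool) : Prop :=
  ¬ ∃ p, IsTotalDiPath n (XM x y M) p

/-- `X = [0,1]^n \ ⋃_i R^i` where `R^i = ∏_j (x^i_j, y^i_j)`. -/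
def Xfull {l n : ℕ} (x y : Fin l → Fin n → ℝ) : Set (Fin n → ℝ) :=
  cube n \ ⋃ i : Fin l, {z | ∀ j, z j ∈ Ioo (x i j) (y i j)}

def ramp (s : ℝ) : ℝ := max 0 (min s 1)

lemma ramp_nonneg (s : ℝ) : 0 ≤ ramp s := le_max_left _ _

lemma ramp_le_one (s : ℝ) : ramp s ≤ 1 := max_le zero_le_one (min_le_right _ _)

lemma ramp_of_nonpos {s : ℝ} (hs : s ≤ 0) : ramp s = 0 := by
  simp [ramp, min_le_of_left_le hs]

lemma ramp_of_one_le {s : ℝ} (hs : 1 ≤ s) : ramp s = 1 := by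
  simp [ramp, hs]

lemma ramp_pos_iff {s : ℝ} : 0 < ramp s ↔ 0 < s := by
  simp [ramp]

lemma monotone_ramp : Monotone ramp := fun _ _ h => max_le_max le_rfl (min_le_min h le_rfl)

@[fun_prop]
lemma continuous_ramp : Continuous ramp := by
  unfold ramp; fun_prop

lemma ramp_eq_one_of_pos {s s' : ℝ} (hs : 0 < ramp s) (hss' : s + 1 ≤ s') : ramp s' = 1 :=
  ramp_of_one_le (by linarith [ramp_pos_iff.mp hs])

/-- The polygonal path `0 → v 0 → v 0 + v 1 → ⋯ → ∑ k, v k`, run through the `k`-th edge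
for `t ∈ [k/m, (k+1)/m]`. -/
def stairPath {m n : ℕ} (v : Fin m → Fin n → ℝ) (t : unitInterval) : Fin n → ℝ :=
  ∑ k : Fin m, ramp (m * t - (k : ℕ)) • v k

lemma stairPath_apply {m n : ℕ} (v : Fin m → Fin n → ℝ) (t : unitInterval) (j : Fin n) :
    stairPath v t j = ∑ k : Fin m, ramp (m * t - (k : ℕ)) * v k j := by
  simp [stairPath, Finset.sum_apply]

section stairPath

variable {m n : ℕ} {v : Fin m → Fin n → ℝ}

lemma continuous_stairPath : Continuous (stairPath v) := by
  unfold stairPath; fun_prop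

lemma monotone_stairPath_apply (hv : ∀ k, 0 ≤ v k) (j : Fin n) :
    Monotone fun t => stairPath v t j := by
  intro a b hab
  simp only [stairPath_apply]
  gcongr with k
  · exact hv k j
  · exact monotone_ramp (by gcongr)

lemma stairPath_zero : stairPath v 0 = 0 := by
  simp [stairPath, ramp_of_nonpos]

lemma stairPath_one : stairPath v 1 = ∑ k, v k := by
  refine Finset.sum_congr rfl fun k _ => ?_
  have hk : (k : ℝ) + 1 ≤ m := by exact_mod_cast k.isLt
  rw [Icc.coe_one, mul_one, ramp_of_one_le (by linarith), one_smul]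

lemma stairPath_mem_cube (hv : ∀ k, 0 ≤ v k) (hsum : ∑ k, v k = 1) (t : unitInterval) :
    stairPath v t ∈ cube n := by
  intro j
  rw [stairPath_apply]
  refine ⟨Finset.sum_nonneg fun k _ => mul_nonneg (ramp_nonneg _) (hv k j), ?_⟩
  calc ∑ k : Fin m, ramp (m * t - (k : ℕ)) * v k j ≤ ∑ k, v k j :=
        Finset.sum_le_sum fun k _ => mul_le_of_le_one_left (hv k j) (ramp_le_one _)
    _ = 1 := by simpa [Finset.sum_apply] using congrFun hsum j

lemma isTotalDiPath_stairPath {Y : Set (Fin n → ℝ)} (hv : ∀ k, 0 ≤ v k) (hsum : ∑ k, v k = 1)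
    (hY : ∀ t, stairPath v t ∈ Y) : IsTotalDiPath n Y (stairPath v) :=
  ⟨⟨continuous_stairPath, hY, monotone_stairPath_apply hv⟩, stairPath_zero, stairPath_one.trans hsum⟩

lemma stairPath_three_apply (u v w : Fin n → ℝ) (t : unitInterval) (j : Fin n) :
    stairPath ![u, v, w] t j =
      ramp (3 * t) * u j + ramp (3 * t - 1) * v j + ramp (3 * t - 2) * w j := by
  simp [stairPath_apply, Fin.sum_univ_three]

end stairPath

lemma not_dead_of_le {l n : ℕ} {x y : Fin l → Fin n → ℝ} {M : Fin l → Fin n → Bool}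
    (hx : ∀ i j, 0 < x i j) (hy : ∀ i j, y i j ≤ 1) (hM : ColUnit M)
    {i₀ i₁ : Fin l} {j₀ j₁ : Fin n} (hj : j₀ ≠ j₁) (h₀ : M i₀ j₀ = true) (h₁ : M i₁ j₁ = true)
    (hx₀ : x i₀ j₀ ≤ 1) (hle : y i₁ j₀ ≤ x i₀ j₀) : ¬ Dead x y M := by
  set u : Fin n → ℝ := Pi.single j₀ (x i₀ j₀)
  set v : Fin n → ℝ := Pi.single j₁ 1
  set w : Fin n → ℝ := 1 - u - v
  have hw : 0 ≤ w := by
    intro k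
    by_cases hk₀ : k = j₀
    · subst hk₀; simp [w, u, v, hj, hx₀]
    by_cases hk₁ : k = j₁
    · subst hk₁; simp [w, u, v, hk₀]
    · simp [w, u, v, hk₀, hk₁]
  have hv : ∀ k, 0 ≤ ![u, v, w] k := by
    intro k
    fin_cases k
    · exact Pi.single_nonneg.mpr (hx i₀ j₀).le
    · exact Pi.single_nonneg.mpr zero_le_one
    · exact hw
  have hsum : ∑ k, ![u, v, w] k = 1 := by
    simp [Fin.sum_univ_three, w]
  refine fun hdead => hdead ⟨_, isTotalDiPath_stairPath hv hsum fun t =>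
    ⟨stairPath_mem_cube hv hsum t, ?_⟩⟩
  intro hmem
  obtain ⟨i, j, hij, ⟨hxz, hzy⟩, hbelow⟩ :
      ∃ i j, M i j = true ∧ stairPath ![u, v, w] t ∈ extHole x y i j := by
    simpa using hmem
  have hz₀ : stairPath ![u, v, w] t j₀ =
      ramp (3 * t) * x i₀ j₀ + ramp (3 * t - 2) * (1 - x i₀ j₀) := by
    simp [stairPath_three_apply, u, v, w, hj]
  have hz₁ : stairPath ![u, v, w] t j₁ = ramp (3 * t - 1) := by
    simp [stairPath_three_apply, u, v, w, hj.symm]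
  have hz₂ : ∀ k, k ≠ j₀ → k ≠ j₁ → stairPath ![u, v, w] t k = ramp (3 * t - 2) := by
    intro k hk₀ hk₁
    simp [stairPath_three_apply, u, v, w, hk₀, hk₁]
  rcases (ramp_nonneg (3 * t - 2)).eq_or_lt with hc | hc
  · have hj₀ : j ≠ j₀ := by
      rintro rfl
      obtain rfl : i = i₀ := (hM j).unique hij h₀
      rw [hz₀, ← hc] at hxz
      nlinarith [ramp_le_one (3 * t), hx i j]
    obtain rfl : j = j₁ := by
      by_contra hj₁
      rw [hz₂ j hj₀ hj₁, ← hc] at hxz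
      linarith [hx i j]
    obtain rfl : i = i₁ := (hM j).unique hij h₁
    have ha : ramp (3 * t) = 1 :=
      ramp_eq_one_of_pos (by rw [← hz₁]; linarith [hx i j]) (by linarith)
    have := (hbelow j₀ hj).2
    rw [hz₀, ha, ← hc] at this
    linarith
  · have hb : ramp (3 * t - 1) = 1 := ramp_eq_one_of_pos hc (by linarith)
    by_cases hj₁ : j = j₁
    · subst hj₁
      rw [hz₁, hb] at hzy
      linarith [hy i j]
    · have := (hbelow j₁ (Ne.symm hj₁)).2
      rw [hz₁, hb] at this
      linarith [hy i j₁]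

lemma dead_of_forall_lt {l n : ℕ} [Nonempty (Fin n)] {x y : Fin l → Fin n → ℝ}
    {M : Fin l → Fin n → Bool} (hy₀ : ∀ i j, 0 < y i j) (hy₁ : ∀ i j, y i j ≤ 1)
    (hcol : ∀ j, ∃ i, M i j = true)
    (hcond : ∀ i j, M i j = true → ∀ i', (∃ j', M i' j' = true) → x i j < y i' j) :
    Dead x y M := by
  rintro ⟨p, ⟨hpc, hpX, -⟩, hp₀, hp₁⟩
  choose c hc using hcol
  set U := {t | ∀ j i', (∃ j', M i' j' = true) → p t j < y i' j}
  have hU : U = {t | ∀ j, p t j ≤ x (c j) j} := by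
    ext t
    refine ⟨fun ht j => ?_, fun ht j i' hi' => (ht j).trans_lt (hcond _ _ (hc j) i' hi')⟩
    by_contra! hgt
    refine (hpX t).2 (mem_iUnion₂.mpr ⟨c j, j, mem_iUnion.mpr ⟨hc j, ⟨hgt, ?_⟩, fun j' _ => ?_⟩⟩)
    · exact ht j (c j) ⟨j, hc j⟩
    · exact ⟨((hpX t).1 j').1, ht j' (c j) ⟨j, hc j⟩⟩
  have hcoord : ∀ j, Continuous fun t => p t j := fun j => (continuous_apply j).comp hpc
  have hUclopen : IsClopen U := by
    refine ⟨hU ▸ ?_, ?_⟩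
    · simp only [ofPred_forall]
      exact isClosed_iInter fun j => isClosed_le (hcoord j) continuous_const
    · simp only [U, ofPred_forall]
      exact isOpen_iInter_of_finite fun j => isOpen_iInter_of_finite fun i' =>
        isOpen_iInter_of_finite fun _ => isOpen_lt (hcoord j) continuous_const
  have hUuniv : U = univ := hUclopen.eq_univ ⟨0, fun j i' _ => by simpa [hp₀] using hy₀ i' j⟩
  obtain ⟨j⟩ := ‹Nonempty (Fin n)›
  have h₁ : (1 : unitInterval) ∈ U := hUuniv ▸ mem_univ _
  have hlt := h₁ j (c j) ⟨j, hc j⟩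
  rw [hp₁] at hlt
  exact (hy₁ (c j) j).not_gt hlt

theorem stmt1_general {l n : ℕ} (hn : 1 ≤ n)
    (x y : Fin l → Fin n → ℝ)
    (hx : ∀ i j, 0 < x i j) (hxy : ∀ i j, x i j < y i j) (hy1 : ∀ i j, y i j < 1)
    (M : Fin l → Fin n → Bool) (hM : ColUnit M) :
    Dead x y M ↔
      ∀ i j, M i j = true → ∀ i', (∃ j', M i' j' = true) → x i j < y i' j := by
  have hy₁ : ∀ i j, y i j ≤ 1 := fun i j => (hy1 i j).le
  constructor
  · intro hdead i₀ j₀ h₀ i₁ ⟨j₁, h₁⟩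
    by_contra! hle
    have hj : j₀ ≠ j₁ := by
      rintro rfl
      obtain rfl := (hM j₀).unique h₁ h₀
      exact (hxy i₁ j₀).not_ge hle
    exact not_dead_of_le hx hy₁ hM hj h₀ h₁ ((hxy _ _).trans (hy1 _ _)).le hle hdead
  · have : Nonempty (Fin n) := ⟨⟨0, hn⟩⟩
    exact dead_of_forall_lt (fun i j => (hx i j).trans (hxy i j)) hy₁ fun j => (hM j).exists

theorem stmt1 {l n : ℕ} (hn : 1 ≤ n) (hl : 1 ≤ l)
    (x y : Fin l → Fin n → ℝ)
    (hx : ∀ i j, 0 < x i j) (hxy : ∀ i j, x i j < y i j) (hy1 : ∀ i j, y i j < 1)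
    (M : Fin l → Fin n → Bool) (hM : ColUnit M) :
    Dead x y M ↔
      ∀ i j, M i j = true → ∀ i', (∃ j', M i' j' = true) → x i j < y i' j :=
  stmt1_general hn x y hx hxy hy1 M hM
end

section
/- For every matrix M ∈ 𝓜^R_{l,n} and all points a, b ∈ X_M, any two directed paths in X_M with source a and target b are dihomotopic in X_M (the space of directed paths from a to b in X_M is either empty or all its elements lie in a single dihomotopy class). -/
/-!
The space `X_M` is closed under coordinatewise maximum: if `z ⊔ w` lay in an extended hole
`R̃^i_j`, then whichever of `z`, `w` attains the maximum in coordinate `j` would lie in the same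
hole, because `R̃^i_j` only bounds the other coordinates from above. Hence for directed paths `p`,
`q` with common endpoints, `u ↦ p u ⊔ q u` is again a directed path in `X_M`, and
`(t, u) ↦ p u ⊔ q (min u t)` is an elementary dihomotopy from `p` to it; by symmetry so is one from
`q`, and the two zig-zag to a dihomotopy from `p` to `q`.
-/

open Set

/-- Elementary dihomotopy of directed paths with fixed common endpoints in `Y`. -/
def ElemDihomotopic (n : ℕ) (Y : Set (Fin n → ℝ)) (p q : unitInterval → Fin n → ℝ) : Prop :=
  IsDiPath n Y p ∧ IsDiPath n Y q ∧ p 0 = q 0 ∧ p 1 = q 1 ∧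
  ∃ H : unitInterval → unitInterval → Fin n → ℝ,
    Continuous (fun tu : unitInterval × unitInterval => H tu.1 tu.2) ∧
    H 0 = p ∧ H 1 = q ∧ (∀ t, IsDiPath n Y (H t)) ∧
    ∀ (u : unitInterval) (j : Fin n), Monotone fun t => H t u j

/-- Dihomotopy: equivalence relation generated by elementary dihomotopy. -/
def Dihomotopic (n : ℕ) (Y : Set (Fin n → ℝ)) :
    (unitInterval → Fin n → ℝ) → (unitInterval → Fin n → ℝ) → Prop :=
  Relation.EqvGen (ElemDihomotopic n Y)

lemma mem_extHole_of_le {l n : ℕ} {x y : Fin l → Fin n → ℝ} {i : Fin l} {j : Fin n}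
    {z v : Fin n → ℝ} (hv : v ∈ extHole x y i j) (hz : 0 ≤ z) (hzv : z ≤ v) (hj : z j = v j) :
    z ∈ extHole x y i j :=
  ⟨hj ▸ hv.1, fun k hk => ⟨hz k, (hzv k).trans_lt (hv.2 k hk).2⟩⟩

lemma sup_mem_cube {n : ℕ} {z w : Fin n → ℝ} (hz : z ∈ cube n) (hw : w ∈ cube n) :
    z ⊔ w ∈ cube n :=
  fun j => ⟨(hz j).1.trans le_sup_left, sup_le (hz j).2 (hw j).2⟩

lemma nonneg_of_mem_cube {n : ℕ} {z : Fin n → ℝ} (hz : z ∈ cube n) : 0 ≤ z :=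
  fun j => (hz j).1

lemma supClosed_XM {l n : ℕ} (x y : Fin l → Fin n → ℝ) (M : Fin l → Fin n → Bool) :
    SupClosed (XM x y M) := by
  rintro z ⟨hz, hz_out⟩ w ⟨hw, hw_out⟩
  refine ⟨sup_mem_cube hz hw, fun h_in => ?_⟩
  simp only [mem_iUnion] at h_in hz_out hw_out
  obtain ⟨i, j, hij, h_hole⟩ := h_in
  rcases le_total (w j) (z j) with hwz | hzw
  · exact hz_out ⟨i, j, hij, mem_extHole_of_le h_hole (nonneg_of_mem_cube hz) le_sup_left
      (sup_eq_left.2 hwz).symm⟩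
  · exact hw_out ⟨i, j, hij, mem_extHole_of_le h_hole (nonneg_of_mem_cube hw) le_sup_right
      (sup_eq_right.2 hzw).symm⟩

section SupClosed

variable {n : ℕ} {Y : Set (Fin n → ℝ)} {p q : unitInterval → Fin n → ℝ}

lemma IsDiPath.sup (hY : SupClosed Y) (hp : IsDiPath n Y p) (hq : IsDiPath n Y q) :
    IsDiPath n Y fun u => p u ⊔ q u :=
  ⟨continuous_pi fun j => ((continuous_apply j).comp hp.1).max ((continuous_apply j).comp hq.1),
    fun u => hY (hp.2.1 u) (hq.2.1 u),
    fun j _ _ hab => sup_le_sup (hp.2.2 j hab) (hq.2.2 j hab)⟩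

lemma IsDiPath.apply_zero_le (hp : IsDiPath n Y p) (u : unitInterval) : p 0 ≤ p u :=
  fun j => hp.2.2 j unitInterval.nonneg'

lemma elemDihomotopic_sup (hY : SupClosed Y) (hp : IsDiPath n Y p) (hq : IsDiPath n Y q)
    (h0 : p 0 = q 0) (h1 : p 1 = q 1) :
    ElemDihomotopic n Y p fun u => p u ⊔ q u := by
  have hq_stop (t : unitInterval) : IsDiPath n Y fun u => q (min u t) :=
    ⟨hq.1.comp (continuous_id.min continuous_const), fun u => hq.2.1 _,
      fun j _ _ hab => hq.2.2 j (min_le_min_right t hab)⟩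
  refine ⟨hp, hp.sup hY hq, by simp [h0], by simp [h1],
    fun t u => p u ⊔ q (min u t), ?_, ?_, ?_, fun t => hp.sup hY (hq_stop t), ?_⟩
  · exact continuous_pi fun j =>
      ((continuous_apply j).comp (hp.1.comp continuous_snd)).max
        ((continuous_apply j).comp (hq.1.comp (continuous_snd.min continuous_fst)))
  · funext u
    simpa [← h0] using hp.apply_zero_le u
  · funext u
    simp [min_eq_left unitInterval.le_one']
  · exact fun u j _ _ hab => sup_le_sup le_rfl (hq.2.2 j (min_le_min_left u hab))

theorem dihomotopic_of_supClosed (hY : SupClosed Y) (hp : IsDiPath n Y p) (hq : IsDiPath n Y q)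
    (h0 : p 0 = q 0) (h1 : p 1 = q 1) : Dihomotopic n Y p q := by
  have hpq := elemDihomotopic_sup hY hp hq h0 h1
  have hqp := elemDihomotopic_sup hY hq hp h0.symm h1.symm
  simp only [sup_comm (q _)] at hqp
  exact .trans _ _ _ (.rel _ _ hpq) (.symm _ _ (.rel _ _ hqp))

end SupClosed

theorem stmt3_general {l n : ℕ}
    (x y : Fin l → Fin n → ℝ)
    (M : Fin l → Fin n → Bool)
    (p q : unitInterval → Fin n → ℝ)
    (hp : IsDiPath n (XM x y M) p) (hq : IsDiPath n (XM x y M) q)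
    (h0 : p 0 = q 0) (h1 : p 1 = q 1) :
    Dihomotopic n (XM x y M) p q :=
  dihomotopic_of_supClosed (supClosed_XM x y M) hp hq h0 h1

theorem stmt3 {l n : ℕ} (hn : 1 ≤ n) (hl : 1 ≤ l)
    (x y : Fin l → Fin n → ℝ)
    (hx : ∀ i j, 0 < x i j) (hxy : ∀ i j, x i j < y i j) (hy1 : ∀ i j, y i j < 1)
    (M : Fin l → Fin n → Bool) (hM : NoZeroRow M)
    (p q : unitInterval → Fin n → ℝ)
    (hp : IsDiPath n (XM x y M) p) (hq : IsDiPath n (XM x y M) q)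
    (h0 : p 0 = q 0) (h1 : p 1 = q 1) :
    Dihomotopic n (XM x y M) p q :=
  stmt3_general x y M p q hp hq h0 h1
end

section
/- A matrix M ∈ 𝓜_{l,n} is dead if and only if there exists a matrix N ∈ 𝓓(X) with N ≤ M. In particular, a matrix M ∈ 𝓜^R_{l,n} belongs to 𝓒(X) if and only if for every matrix N ∈ 𝓓(X) there exist indices i ∈ {0,…,l−1} and j ∈ {0,…,n−1} such that M(i,j) = 0 and N(i,j) = 1. -/
open Set

/-! Call a choice `r` of one hole per column blocking if `x^{r j'}_{j'} < y^{r j}_{j'}` for all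
`j ≠ j'`; `M` is dead iff its holes contain a blocking choice, and the matrix with ones exactly
at the `(r j, j)` is then the required `N`.

If `r` is blocking, let `σ_j` be the last time a directed path has coordinate `j` at most
`x^{r j}_j`. Just after the smallest `σ_j` the path would be inside `R̃^{r j}_j` unless some other
coordinate `j'` already reached `y^{r j}_{j'} > x^{r j'}_{j'}`, which forces `σ_{j'} < σ_j`.

If no choice is blocking, some hole `e` can be escaped through a column `c` all of whose holes
start above `y^e_c`. Removing `e` and repeating orders the holes; lifting coordinates in that
order, by piecewise linear interpolation between the resulting corners, avoids every hole. -/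

open Filter Topology

def IsBlocking {l n : ℕ} (x y : Fin l → Fin n → ℝ) (r : Fin n → Fin l) : Prop :=
  ∀ j j', j ≠ j' → x (r j') j' < y (r j) j'

theorem Monotone.exists_last_le {f : ℝ → ℝ} (hmono : Monotone f) (hf : Continuous f)
    {a b v : ℝ} (ha : f a ≤ v) (hb : v < f b) : ∃ σ, f σ ≤ v ∧ ∀ t, σ < t → v < f t := by
  have hbdd : BddAbove {t | f t ≤ v} :=
    ⟨b, fun t ht => not_lt.1 fun h => (hb.trans_le (hmono h.le)).not_ge ht⟩
  refine ⟨_, (isClosed_le hf continuous_const).csSup_mem ⟨a, ha⟩ hbdd, fun t ht => ?_⟩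
  exact not_le.1 fun h => (le_csSup hbdd h).not_gt ht

theorem IsTotalDiPath.exists_extend {n : ℕ} {Y : Set (Fin n → ℝ)} {p : unitInterval → Fin n → ℝ}
    (hp : IsTotalDiPath n Y p) :
    ∃ P : ℝ → Fin n → ℝ, Continuous P ∧ (∀ t, P t ∈ Y) ∧ (∀ j, Monotone fun t => P t j) ∧
      P 0 = 0 ∧ P 1 = 1 := by
  obtain ⟨⟨hcont, hmem, hmono⟩, h0, h1⟩ := hp
  refine ⟨IccExtend zero_le_one p, hcont.comp continuous_projIcc, fun t => hmem _,
    fun j => (hmono j).comp (monotone_projIcc zero_le_one), ?_, ?_⟩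
  · rw [IccExtend_left]; exact h0
  · rw [IccExtend_right]; exact h1

section Dead

variable {l n : ℕ} {x y : Fin l → Fin n → ℝ} {M : Fin l → Fin n → Bool}

theorem Dead.mono {N : Fin l → Fin n → Bool} (hNM : matLE N M) (hN : Dead x y N) :
    Dead x y M := by
  rintro ⟨p, ⟨hcont, hmem, hmono⟩, h0, h1⟩
  refine hN ⟨p, ⟨hcont, fun t => ⟨(hmem t).1, fun hN => (hmem t).2 ?_⟩, hmono⟩, h0, h1⟩
  simp only [mem_iUnion] at hN ⊢
  obtain ⟨i, j, hij, hz⟩ := hN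
  exact ⟨i, j, hNM i j hij, hz⟩

theorem exists_ne_le_of_last_le {P : ℝ → Fin n → ℝ} (hP : Continuous P) (hPY : ∀ t, P t ∈ XM x y M)
    {i : Fin l} {j : Fin n} (hM : M i j = true) (hxy : ∀ j, x i j < y i j) {σ : ℝ}
    (hσ : P σ j ≤ x i j) (hafter : ∀ t, σ < t → x i j < P t j) :
    ∃ j', j' ≠ j ∧ y i j' ≤ P σ j' := by
  by_contra! h
  have hbelow : ∀ j', P σ j' < y i j' := fun j' => by
    by_cases hj : j' = j
    · exact hj ▸ hσ.trans_lt (hxy j)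
    · exact h j' hj
  have hnear : ∀ᶠ t in 𝓝[>] σ, σ < t ∧ ∀ j', P t j' < y i j' :=
    eventually_mem_nhdsWithin.and <| nhdsWithin_le_nhds <| eventually_all.2 fun j' =>
      ((continuous_apply j').comp hP).continuousAt.eventually (gt_mem_nhds (hbelow j'))
  obtain ⟨t, hσt, hty⟩ := hnear.exists
  refine (hPY t).2 (mem_iUnion₂.2 ⟨i, j, mem_iUnion.2 ⟨hM, ?_⟩⟩)
  exact ⟨⟨hafter t hσt, hty j⟩, fun j' _ => ⟨((hPY t).1 j').1, hty j'⟩⟩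

theorem dead_of_isBlocking [NeZero n] (hx : ∀ i j, 0 ≤ x i j) (hxy : ∀ i j, x i j < y i j)
    (hy1 : ∀ i j, y i j ≤ 1) {r : Fin n → Fin l} (hrM : ∀ j, M (r j) j = true)
    (hr : IsBlocking x y r) : Dead x y M := by
  rintro ⟨p, hp⟩
  obtain ⟨P, hPc, hPY, hPmono, hP0, hP1⟩ := hp.exists_extend
  choose σ hσ hafter using fun j => (hPmono j).exists_last_le ((continuous_apply j).comp hPc)
    (a := 0) (b := 1) (v := x (r j) j) (by simp [hP0, hx])
    (by simp [hP1, (hxy _ _).trans_le (hy1 _ _)])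
  obtain ⟨j, hj⟩ := Finite.exists_min σ
  obtain ⟨j', hj'j, hyP⟩ := exists_ne_le_of_last_le hPc hPY (hrM j) (hxy _) (hσ j) (hafter j)
  have hlt : σ j' < σ j := lt_of_not_ge fun h =>
    ((hσ j').trans_lt ((hr j j' hj'j.symm).trans_le hyP)).not_ge (hPmono j' h)
  exact (hj j').not_gt hlt

end Dead

noncomputable def linearInterp (f : ℕ → ℝ) (S : ℕ) (s : ℝ) : ℝ :=
  f 0 + ∑ k ∈ Finset.range S, (f (k + 1) - f k) * (projIcc (0 : ℝ) 1 zero_le_one (s - k) : ℝ)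

theorem continuous_linearInterp (f : ℕ → ℝ) (S : ℕ) : Continuous (linearInterp f S) := by
  unfold linearInterp
  fun_prop

theorem monotone_linearInterp {f : ℕ → ℝ} (hf : Monotone f) (S : ℕ) :
    Monotone (linearInterp f S) := fun s s' hss' => by
  unfold linearInterp
  gcongr with k
  · exact sub_nonneg.2 (hf k.le_succ)
  · exact monotone_projIcc _ (by linarith)

theorem linearInterp_natCast (f : ℕ → ℝ) {S m : ℕ} (hm : m ≤ S) :
    linearInterp f S m = f m := by
  have hbefore : ∀ k ∈ Finset.range m,
      (f (k + 1) - f k) * (projIcc (0 : ℝ) 1 zero_le_one (m - k) : ℝ) = f (k + 1) - f k := by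
    intro k hk
    have : (1 : ℝ) ≤ m - k := by
      have : (k : ℝ) + 1 ≤ m := by exact_mod_cast Finset.mem_range.1 hk
      linarith
    rw [projIcc_of_right_le _ this, Subtype.coe_mk, mul_one]
  have hafter : ∀ k ∈ Finset.Ico m S,
      (f (k + 1) - f k) * (projIcc (0 : ℝ) 1 zero_le_one (m - k) : ℝ) = 0 := by
    intro k hk
    have : (m : ℝ) - k ≤ 0 := by
      have : (m : ℝ) ≤ k := by exact_mod_cast (Finset.mem_Ico.1 hk).1
      linarith
    rw [projIcc_of_le_left _ this, Subtype.coe_mk, mul_zero]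
  rw [linearInterp, ← Finset.sum_range_add_sum_Ico _ hm, Finset.sum_congr rfl hbefore,
    Finset.sum_congr rfl hafter, Finset.sum_range_sub, Finset.sum_const_zero]
  ring

theorem exists_monotone_path_through {ι : Type*} {a : ℕ → ι → ℝ} (ha : Monotone a) {S : ℕ}
    (hS : 0 < S) :
    ∃ p : unitInterval → ι → ℝ, Continuous p ∧ Monotone p ∧ p 0 = a 0 ∧ p 1 = a S ∧
      ∀ t, ∃ m < S, a m ≤ p t ∧ p t ≤ a (m + 1) := by
  set P : ℝ → ι → ℝ := fun s j => linearInterp (a · j) S s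
  have hPmono : Monotone P := fun s s' h j => monotone_linearInterp (fun _ _ hk => ha hk j) S h
  have hPnat : ∀ m ≤ S, P m = a m := fun m hm => funext fun j => linearInterp_natCast _ hm
  refine ⟨fun t => P (t * S), ?_, fun t t' h => hPmono ?_, ?_, ?_, fun t => ?_⟩
  · exact continuous_pi fun j => (continuous_linearInterp _ S).comp (by fun_prop)
  · exact mul_le_mul_of_nonneg_right h (Nat.cast_nonneg S)
  · simpa using hPnat 0 (Nat.zero_le S)
  · simpa using hPnat S le_rfl
  · have ht0 : 0 ≤ (t : ℝ) * S := mul_nonneg t.2.1 (Nat.cast_nonneg S)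
    have ht1 : (t : ℝ) * S ≤ S := mul_le_of_le_one_left (Nat.cast_nonneg S) t.2.2
    set m := min ⌊(t : ℝ) * S⌋₊ (S - 1) with hm
    have hmS : m < S := by omega
    have hlo : (m : ℝ) ≤ t * S := (Nat.cast_le.2 (min_le_left _ _)).trans (Nat.floor_le ht0)
    have hhi : (t : ℝ) * S ≤ (m + 1 : ℕ) := by
      rcases min_choice ⌊(t : ℝ) * S⌋₊ (S - 1) with h | h
      · rw [hm, h, Nat.cast_succ]; exact (Nat.lt_floor_add_one _).le
      · rw [hm, h, Nat.sub_add_cancel hS]; exact ht1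
    refine ⟨m, hmS, ?_, ?_⟩
    · rw [← hPnat m hmS.le]; exact hPmono hlo
    · rw [← hPnat (m + 1) hmS]; exact hPmono hhi

section Alive

variable {l n : ℕ} {x y : Fin l → Fin n → ℝ}

theorem exists_escape_of_not_isBlocking {s : Finset (Fin l × Fin n)} (hs : s.Nonempty)
    (h : ¬ ∃ r : Fin n → Fin l, (∀ j, (r j, j) ∈ s) ∧ IsBlocking x y r) :
    ∃ e ∈ s, ∃ c, c ≠ e.2 ∧ ∀ i, (i, c) ∈ s → y e.1 c ≤ x i c := by
  classical
  by_cases hempty : ∃ c, ∀ i, (i, c) ∉ s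
  · obtain ⟨c, hc⟩ := hempty
    obtain ⟨e, he⟩ := hs
    exact ⟨e, he, c, fun hce => hc e.1 (hce ▸ he), fun i hi => absurd hi (hc i)⟩
  -- in each column take the hole with the lowest `x`; as these do not block, one of them escapes
  simp only [not_exists, not_forall, not_not] at hempty
  have hmin : ∀ c, ∃ r ∈ Finset.univ.filter (fun i => (i, c) ∈ s),
      ∀ i ∈ Finset.univ.filter (fun i => (i, c) ∈ s), x r c ≤ x i c := fun c =>
    Finset.exists_min_image _ _ (by simpa [Finset.Nonempty] using hempty c)
  choose r hrs hr using hmin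
  simp only [Finset.mem_filter, Finset.mem_univ, true_and] at hrs hr
  obtain ⟨j, j', hjj', hyx⟩ : ∃ j j', j ≠ j' ∧ y (r j) j' ≤ x (r j') j' := by
    by_contra! hblock
    exact h ⟨r, hrs, hblock⟩
  exact ⟨(r j, j), hrs j, j', hjj'.symm, fun i hi => hyx.trans (hr j' i hi)⟩

/-- An order in which the holes `e ∈ s` can be passed: entry `(e, c)` escapes `e` through
column `c`, and no later hole in column `c` starts below the escape height. -/
def IsEscapeSchedule (x y : Fin l → Fin n → ℝ) (s : Finset (Fin l × Fin n))
    (es : List ((Fin l × Fin n) × Fin n)) : Prop :=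
  (∀ e ∈ s, ∃ c, (e, c) ∈ es) ∧ (∀ q ∈ es, q.1 ∈ s ∧ q.2 ≠ q.1.2) ∧
    es.Pairwise fun q q' => q'.1.2 = q.2 → y q.1.1 q.2 ≤ x q'.1.1 q'.1.2

theorem exists_isEscapeSchedule_of_not_isBlocking (s : Finset (Fin l × Fin n))
    (h : ¬ ∃ r : Fin n → Fin l, (∀ j, (r j, j) ∈ s) ∧ IsBlocking x y r) :
    ∃ es, IsEscapeSchedule x y s es := by
  classical
  induction s using Finset.strongInduction with
  | H s ih =>
  rcases s.eq_empty_or_nonempty with rfl | hs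
  · exact ⟨[], by simp, by simp, List.Pairwise.nil⟩
  obtain ⟨e, hes, c, hc, hclean⟩ := exists_escape_of_not_isBlocking hs h
  obtain ⟨es, hcov, hmem, hpair⟩ := ih (s.erase e) (Finset.erase_ssubset hes)
    fun ⟨r, hr, hblock⟩ => h ⟨r, fun j => Finset.mem_of_mem_erase (hr j), hblock⟩
  refine ⟨(e, c) :: es, fun e' he' => ?_, fun q hq => ?_, List.Pairwise.cons ?_ hpair⟩
  · by_cases he'e : e' = e
    · exact ⟨c, he'e ▸ List.mem_cons_self⟩
    · obtain ⟨c', hc'⟩ := hcov e' (Finset.mem_erase.2 ⟨he'e, he'⟩)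
      exact ⟨c', List.mem_cons_of_mem _ hc'⟩
  · rcases List.mem_cons.1 hq with rfl | hq
    · exact ⟨hes, hc⟩
    · exact ⟨Finset.mem_of_mem_erase (hmem q hq).1, (hmem q hq).2⟩
  · rintro ⟨⟨i, j⟩, c'⟩ hq (rfl : j = c)
    exact hclean i (Finset.mem_of_mem_erase (hmem _ hq).1)

/-- The corners visited by the path: stage `k + 1` lifts coordinate `es[k].2` to the top of
hole `es[k].1`, and the stage after the last entry is the corner `1`. -/
noncomputable def stageLevel (y : Fin l → Fin n → ℝ) (es : List ((Fin l × Fin n) × Fin n)) :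
    ℕ → Fin n → ℝ
  | 0, _ => 0
  | k + 1, j =>
    if h : k < es.length then
      if es[k].2 = j then max (stageLevel y es k j) (y es[k].1.1 j) else stageLevel y es k j
    else 1

variable {es : List ((Fin l × Fin n) × Fin n)}

theorem stageLevel_le_one (hy1 : ∀ i j, y i j ≤ 1) (k : ℕ) (j : Fin n) :
    stageLevel y es k j ≤ 1 := by
  induction k with
  | zero => simp [stageLevel]
  | succ k ih =>
    simp only [stageLevel]
    split_ifs
    · exact max_le ih (hy1 _ _)
    · exact ih
    · exact le_rfl

theorem monotone_stageLevel (hy1 : ∀ i j, y i j ≤ 1) : Monotone (stageLevel y es) := by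
  refine monotone_nat_of_le_succ fun k j => ?_
  simp only [stageLevel]
  split_ifs
  · exact le_max_left _ _
  · exact le_rfl
  · exact stageLevel_le_one hy1 k j

theorem stageLevel_length_succ : stageLevel y es (es.length + 1) = 1 := by
  ext j
  simp [stageLevel]

theorem le_stageLevel_succ {m : ℕ} (hm : m < es.length) :
    y es[m].1.1 es[m].2 ≤ stageLevel y es (m + 1) es[m].2 := by
  simp only [stageLevel, dif_pos hm]
  exact le_max_right _ _

theorem stageLevel_le_of_isEscapeSchedule {s : Finset (Fin l × Fin n)}
    (hes : IsEscapeSchedule x y s es) (hx : ∀ i j, 0 ≤ x i j) {m : ℕ} (hm : m < es.length) :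
    ∀ k ≤ m + 1, stageLevel y es k es[m].1.2 ≤ x es[m].1.1 es[m].1.2 := by
  intro k hk
  induction k with
  | zero => exact hx _ _
  | succ k ih =>
    have hkm : k ≤ m := Nat.le_of_succ_le_succ hk
    simp only [stageLevel, dif_pos (hkm.trans_lt hm)]
    split_ifs with hkj
    · refine max_le (ih (by omega)) ?_
      rcases hkm.lt_or_eq with hlt | rfl
      · exact hkj ▸ List.pairwise_iff_getElem.1 hes.2.2 k m _ hm hlt hkj.symm
      · exact absurd hkj (hes.2.1 _ (List.getElem_mem hm)).2
    · exact ih (by omega)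

theorem notMem_extHole_of_isEscapeSchedule {s : Finset (Fin l × Fin n)}
    (hes : IsEscapeSchedule x y s es) (hx : ∀ i j, 0 ≤ x i j) (hy1 : ∀ i j, y i j ≤ 1)
    {i : Fin l} {j : Fin n} (hij : (i, j) ∈ s) {m : ℕ} {z : Fin n → ℝ}
    (hlo : stageLevel y es m ≤ z) (hhi : z ≤ stageLevel y es (m + 1)) :
    z ∉ extHole x y i j := by
  rintro ⟨⟨hxz, -⟩, hside⟩
  obtain ⟨c, hc⟩ := hes.1 _ hij
  obtain ⟨m', hm', hq⟩ := List.mem_iff_getElem.1 hc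
  have hcj : c ≠ j := by simpa [hq] using (hes.2.1 _ hc).2
  rcases le_or_gt m m' with hmm' | hm'm
  · -- coordinate `j` has not yet been lifted above `x i j`
    have := stageLevel_le_of_isEscapeSchedule hes hx hm' (m + 1) (by omega)
    simp only [hq] at this
    exact (hxz.trans_le (hhi j)).not_ge this
  · -- coordinate `c` is already at the top of the hole
    have := le_stageLevel_succ (y := y) hm'
    simp only [hq] at this
    exact (hside c hcj).2.not_ge
      (this.trans ((monotone_stageLevel hy1 (Nat.succ_le_of_lt hm'm) c).trans (hlo c)))

theorem alive_of_not_isBlocking (hx : ∀ i j, 0 ≤ x i j) (hy1 : ∀ i j, y i j ≤ 1)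
    {M : Fin l → Fin n → Bool}
    (h : ¬ ∃ r : Fin n → Fin l, (∀ j, M (r j) j = true) ∧ IsBlocking x y r) :
    ∃ p, IsTotalDiPath n (XM x y M) p := by
  classical
  set s := Finset.univ.filter fun e : Fin l × Fin n => M e.1 e.2 = true
  obtain ⟨es, hes⟩ := exists_isEscapeSchedule_of_not_isBlocking (x := x) (y := y) s
    fun ⟨r, hr, hblock⟩ => h ⟨r, fun j => by simpa [s] using hr j, hblock⟩
  obtain ⟨p, hpc, hpmono, hp0, hp1, hstage⟩ :=
    exists_monotone_path_through (monotone_stageLevel (es := es) hy1) (Nat.succ_pos es.length)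
  rw [stageLevel_length_succ] at hp1
  refine ⟨p, ⟨hpc, fun t => ⟨fun j => ⟨?_, ?_⟩, ?_⟩, fun j _ _ h => hpmono h j⟩, hp0, hp1⟩
  · exact (congrFun hp0 j).symm.trans_le (hpmono unitInterval.nonneg' j)
  · exact (hpmono unitInterval.le_one' j).trans_eq (congrFun hp1 j)
  · simp only [mem_iUnion]
    rintro ⟨i, j, hM, hz⟩
    obtain ⟨m, -, hlo, hhi⟩ := hstage t
    exact notMem_extHole_of_isEscapeSchedule hes hx hy1 (by simpa [s] using hM) hlo hhi hz

end Alive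

theorem dead_iff_exists_isBlocking {l n : ℕ} [NeZero n] {x y : Fin l → Fin n → ℝ}
    (hx : ∀ i j, 0 ≤ x i j) (hxy : ∀ i j, x i j < y i j) (hy1 : ∀ i j, y i j ≤ 1)
    (M : Fin l → Fin n → Bool) :
    Dead x y M ↔ ∃ r : Fin n → Fin l, (∀ j, M (r j) j = true) ∧ IsBlocking x y r := by
  refine ⟨fun hM => ?_, fun ⟨_, hrM, hr⟩ => dead_of_isBlocking hx hxy hy1 hrM hr⟩
  by_contra h
  exact hM <| alive_of_not_isBlocking hx hy1 h

theorem colUnit_decide_eq {l n : ℕ} (r : Fin n → Fin l) : ColUnit fun i j => decide (r j = i) :=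
  fun j => ⟨r j, by simp, fun i hi => (of_decide_eq_true hi).symm⟩

theorem not_matLE_iff {l n : ℕ} {M N : Fin l → Fin n → Bool} :
    ¬ matLE N M ↔ ∃ i j, M i j = false ∧ N i j = true := by
  simp [matLE, and_comm]

theorem stmt4_general {l n : ℕ} (hn : 1 ≤ n)
    (x y : Fin l → Fin n → ℝ)
    (hx : ∀ i j, 0 < x i j) (hxy : ∀ i j, x i j < y i j) (hy1 : ∀ i j, y i j < 1)
    (M : Fin l → Fin n → Bool) :
    (Dead x y M ↔ ∃ N : Fin l → Fin n → Bool, ColUnit N ∧ Dead x y N ∧ matLE N M) ∧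
      (NoZeroRow M →
        ((∃ p, IsTotalDiPath n (XM x y M) p) ↔
          ∀ N : Fin l → Fin n → Bool, ColUnit N → Dead x y N →
            ∃ i j, M i j = false ∧ N i j = true)) := by
  have : NeZero n := ⟨by omega⟩
  have hblock := dead_iff_exists_isBlocking (fun i j => (hx i j).le) hxy (fun i j => (hy1 i j).le)
  have hdead : Dead x y M ↔ ∃ N, ColUnit N ∧ Dead x y N ∧ matLE N M := by
    refine ⟨fun hM => ?_, fun ⟨_, _, hN, hNM⟩ => hN.mono hNM⟩
    obtain ⟨r, hrM, hr⟩ := (hblock M).1 hM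
    refine ⟨fun i j => decide (r j = i), colUnit_decide_eq r,
      (hblock _).2 ⟨r, by simp, hr⟩, fun i j hij => ?_⟩
    obtain rfl : r j = i := of_decide_eq_true hij
    exact hrM j
  refine ⟨hdead, fun _ => ?_⟩
  have halive : (∃ p, IsTotalDiPath n (XM x y M) p) ↔ ¬ Dead x y M := not_not.symm
  simp only [halive, hdead, not_exists, not_and, ← not_matLE_iff]

theorem stmt4 {l n : ℕ} (hn : 1 ≤ n) (hl : 1 ≤ l)
    (x y : Fin l → Fin n → ℝ)
    (hx : ∀ i j, 0 < x i j) (hxy : ∀ i j, x i j < y i j) (hy1 : ∀ i j, y i j < 1)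
    (M : Fin l → Fin n → Bool) :
    (Dead x y M ↔ ∃ N : Fin l → Fin n → Bool, ColUnit N ∧ Dead x y N ∧ matLE N M) ∧
      (NoZeroRow M →
        ((∃ p, IsTotalDiPath n (XM x y M) p) ↔
          ∀ N : Fin l → Fin n → Bool, ColUnit N → Dead x y N →
            ∃ i j, M i j = false ∧ N i j = true)) :=
  stmt4_general hn x y hx hxy hy1 M
end

section
/- A matrix M ∈ 𝓜^C_{l,n} is dead if and only if X_M contains a deadlock, i.e., a point x ∈ X_M with x ≠ (1,…,1) such that every directed path in X_M with source x is constant. -/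
open Set

section Aux
open Set
variable {l n : ℕ} {x y : Fin l → Fin n → ℝ} {M : Fin l → Fin n → Bool}

lemma mem_XM_iff {z : Fin n → ℝ} :
    z ∈ XM x y M ↔ z ∈ cube n ∧ ∀ i j, M i j = true → z ∉ extHole x y i j := by
  simp only [XM, mem_diff, mem_iUnion, not_exists]

lemma not_mem_extHole {z : Fin n → ℝ} (i : Fin l) (j : Fin n)
    (h : z j ≤ x i j ∨ y i j ≤ z j ∨ ∃ j', j' ≠ j ∧ y i j' ≤ z j') :
    z ∉ extHole x y i j := by
  rintro ⟨h1, h2⟩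
  rcases h with h | h | ⟨j', hj', hy⟩
  · exact absurd h1.1 (not_lt.2 h)
  · exact absurd h1.2 (not_lt.2 h)
  · exact absurd (h2 j' hj').2 (not_lt.2 hy)

lemma XM_block {z : Fin n → ℝ} (hz : z ∈ XM x y M) (i : Fin l) (j : Fin n) (hMij : M i j = true)
    (h1 : x i j < z j) (h2 : z j < y i j) : ∃ j', j' ≠ j ∧ y i j' ≤ z j' := by
  have hh := (mem_XM_iff.1 hz).2 i j hMij
  by_contra hc
  push_neg at hc
  exact hh ⟨⟨h1, h2⟩, fun j' hj' => ⟨((mem_XM_iff.1 hz).1 j').1, hc j' hj'⟩⟩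

lemma move_lemma (z : Fin n → ℝ) (hz : z ∈ XM x y M) (j : Fin n) (ε : ℝ) (hε : 0 < ε)
    (h1 : z j + ε ≤ 1)
    (h2 : ∀ i, M i j = true → z j + ε ≤ x i j ∨ y i j ≤ z j ∨ ∃ j', j' ≠ j ∧ y i j' ≤ z j') :
    ∃ p, IsDiPath n (XM x y M) p ∧ p 0 = z ∧ p 1 j ≠ z j := by
  classical
  set p : unitInterval → Fin n → ℝ := fun t j' => if j' = j then z j + (t : ℝ) * ε else z j'
    with hp
  have hcube := (mem_XM_iff.1 hz).1
  have hle : ∀ (t : unitInterval) (j' : Fin n), z j' ≤ p t j' := by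
    intro t j'
    by_cases h : j' = j
    · subst h; simp only [hp, if_pos rfl]
      nlinarith [t.2.1, hε.le]
    · simp only [hp, if_neg h]; exact le_rfl
  refine ⟨p, ⟨?_, ?_, ?_⟩, ?_, ?_⟩
  · apply continuous_pi; intro j'
    by_cases h : j' = j
    · simp only [hp, h, if_pos rfl]
      exact continuous_const.add (continuous_subtype_val.mul continuous_const)
    · simp only [hp, if_neg h]; exact continuous_const
  · intro t
    rw [mem_XM_iff]
    constructor
    · intro j'
      by_cases h : j' = j
      · subst h; simp only [hp, if_pos rfl]
        constructor
        · nlinarith [(hcube j').1, t.2.1, hε.le]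
        · nlinarith [t.2.2, hε.le]
      · simp only [hp, if_neg h]; exact hcube j'
    · intro i j2 hM2
      by_cases hj2 : j2 = j
      · subst hj2
        apply not_mem_extHole i j2
        rcases h2 i hM2 with h | h | ⟨j', hj', hy'⟩
        · left
          simp only [hp, if_pos rfl]
          nlinarith [t.2.2, hε.le]
        · right; left
          exact h.trans (hle t j2)
        · right; right
          exact ⟨j', hj', hy'.trans (hle t j')⟩
      · apply not_mem_extHole i j2
        have hnz := (mem_XM_iff.1 hz).2 i j2 hM2
        simp only [extHole, mem_setOf_eq, not_and, mem_Ioo] at hnz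
        by_cases hmem : x i j2 < z j2 ∧ z j2 < y i j2
        · have := hnz ⟨hmem.1, hmem.2⟩
          push_neg at this
          obtain ⟨j3, hj3, hnot⟩ := this
          right; right
          refine ⟨j3, hj3, ?_⟩
          have hy3 : y i j3 ≤ z j3 := by
            have := (by simpa [mem_Ico] using hnot : 0 ≤ z j3 → y i j3 ≤ z j3)
            exact this (hcube j3).1
          exact hy3.trans (hle t j3)
        · rcases not_and_or.1 hmem with h | h
          · left; simp only [hp, if_neg hj2]; exact not_lt.1 h
          · right; left; simp only [hp, if_neg hj2]; exact not_lt.1 h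
  · intro j'
    by_cases h : j' = j
    · subst h
      intro t t' htt'
      simp only [hp, if_pos rfl]
      have : (t : ℝ) ≤ (t' : ℝ) := htt'
      nlinarith [hε.le]
    · intro t t' _
      simp only [hp, if_neg h]
      exact le_rfl
  · funext j'
    by_cases h : j' = j
    · subst h; simp [hp]
    · simp [hp, h]
  · simp only [hp, if_pos rfl]
    intro hcon
    have : (1 : unitInterval) = (1:ℝ) := rfl
    nlinarith [hcon]
lemma stuck_lemma (hxy : ∀ i j, x i j < y i j)
    (ι : Fin n → Fin l) (hι : ∀ j, M (ι j) j = true)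
    (hC : ∀ j j' : Fin n, j' ≠ j → x (ι j') j' < y (ι j) j')
    (p : unitInterval → Fin n → ℝ) (hp : IsDiPath n (XM x y M) p)
    (h0 : ∀ j, p 0 j ≤ x (ι j) j) : ∀ t j, p t j ≤ x (ι j) j := by
  obtain ⟨hcont, hmem, hmono⟩ := hp
  set q : ℝ → Fin n → ℝ := fun t => p (projIcc 0 1 zero_le_one t) with hq
  have hqc : Continuous q := hcont.comp continuous_projIcc
  have hqmono : ∀ j, Monotone fun t => q t j :=
    fun j => (hmono j).comp (monotone_projIcc zero_le_one)
  have hqmem : ∀ t, q t ∈ XM x y M := fun t => hmem _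
  have hq0 : q 0 = p 0 := by rw [hq]; simp [projIcc_left]
  suffices H : ∀ t ∈ Icc (0:ℝ) 1, ∀ j, q t j ≤ x (ι j) j by
    intro t j
    have h2 := H t.val t.2 j
    simp only [hq, projIcc_val] at h2
    exact h2
  · by_contra hcon
    push_neg at hcon
    obtain ⟨t0, ht0, j0', hj0'⟩ := hcon
    set S : Fin n → Set ℝ := fun j => {t | t ∈ Icc (0:ℝ) 1 ∧ q t j ≤ x (ι j) j} with hS
    have hS0 : ∀ j, (0:ℝ) ∈ S j := by
      intro j
      refine ⟨⟨le_refl _, zero_le_one⟩, ?_⟩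
      rw [show q 0 j = p 0 j from congrFun hq0 j]
      exact h0 j
    have hSbdd : ∀ j, BddAbove (S j) := fun j => ⟨1, fun t ht => ht.1.2⟩
    have hSclosed : ∀ j, IsClosed (S j) := by
      intro j
      exact isClosed_Icc.inter (isClosed_le ((continuous_apply j).comp hqc) continuous_const)
    set m : Fin n → ℝ := fun j => sSup (S j) with hm
    have hmmem : ∀ j, m j ∈ S j := fun j => (hSclosed j).csSup_mem ⟨0, hS0 j⟩ (hSbdd j)
    have hlt_of : ∀ j, ∀ t ∈ Icc (0:ℝ) 1, x (ι j) j < q t j → m j < t := by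
      intro j t ht hlt
      by_contra hle
      push_neg at hle
      exact absurd ((hqmono j hle).trans (hmmem j).2) (not_le.2 hlt)
    obtain ⟨j0, -, hj0min⟩ :=
      Finset.exists_min_image Finset.univ m ⟨j0', Finset.mem_univ _⟩
    have hmlt1 : m j0 < 1 :=
      lt_of_le_of_lt (hj0min j0' (Finset.mem_univ _))
        (lt_of_lt_of_le (hlt_of j0' t0 ht0 hj0') ht0.2)
    have hm0 : (0:ℝ) ≤ m j0 := le_csSup (hSbdd j0) (hS0 j0)
    have hatm : ∀ j, q (m j0) j ≤ x (ι j) j := by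
      intro j
      exact (hqmono j (hj0min j (Finset.mem_univ _))).trans (hmmem j).2
    have hev : ∀ᶠ t in nhds (m j0), (∀ j, q t j < y (ι j0) j) ∧ t < 1 := by
      apply Filter.Eventually.and
      · rw [Filter.eventually_all]
        intro j
        apply ((continuous_apply j).comp hqc).continuousAt.eventually_lt
          continuousAt_const
        by_cases h : j = j0
        · subst h; exact lt_of_le_of_lt (hatm j) (hxy _ _)
        · exact lt_of_le_of_lt (hatm j) (hC j0 j h)
      · exact (isOpen_Iio.eventually_mem hmlt1).mono fun t ht => ht
    haveI := nhdsGT_neBot (m j0)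
    have hev2 : ∀ᶠ t in nhdsWithin (m j0) (Ioi (m j0)),
        ((∀ j, q t j < y (ι j0) j) ∧ t < 1) ∧ t ∈ Ioi (m j0) :=
      (hev.filter_mono nhdsWithin_le_nhds).and self_mem_nhdsWithin
    obtain ⟨t, ⟨hty, ht1⟩, htm⟩ := hev2.exists
    have htIcc : t ∈ Icc (0:ℝ) 1 := ⟨le_of_lt (lt_of_le_of_lt hm0 htm), le_of_lt ht1⟩
    have hgt : x (ι j0) j0 < q t j0 := by
      by_contra hle
      push_neg at hle
      have : t ∈ S j0 := ⟨htIcc, hle⟩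
      exact absurd (le_csSup (hSbdd j0) this) (not_le.2 htm)
    have hhole : q t ∈ extHole x y (ι j0) j0 := by
      refine ⟨⟨hgt, hty j0⟩, fun j' hj' => ⟨((mem_XM_iff.1 (hqmem t)).1 j').1, hty j'⟩⟩
    exact (mem_XM_iff.1 (hqmem t)).2 (ι j0) j0 (hι j0) hhole
lemma path_exists (hx : ∀ i j, 0 < x i j) (hxy : ∀ i j, x i j < y i j)
    (hy1 : ∀ i j, y i j < 1)
    (ι : Fin n → Fin l) (huniq : ∀ i j, M i j = true → i = ι j)
    (a b : Fin n) (hab : a ≠ b) (hyx : y (ι a) b ≤ x (ι b) b) :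
    ∃ p, IsTotalDiPath n (XM x y M) p := by
  classical
  set xb := x (ι b) b with hxbdef
  have hxb0 : 0 < xb := hx _ _
  have hxb1 : xb < 1 := (hxy _ _).trans (hy1 _ _)
  set p : unitInterval → Fin n → ℝ := fun t j =>
    if j = b then xb * min (3*(t:ℝ)) 1 + (1-xb) * max (3*(t:ℝ)-2) 0
    else if j = a then min (max (3*(t:ℝ)-1) 0) 1
    else max (3*(t:ℝ)-2) 0 with hp
  have key1 : ∀ r : ℝ, (0:ℝ) < max (3*r-2) 0 → min (max (3*r-1) 0) 1 = 1 := by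
    intro r h
    have h2 : 0 < 3*r - 2 := by
      rcases le_or_gt (3*r-2) 0 with h' | h'
      · rw [max_eq_right h'] at h; linarith
      · exact h'
    exact min_eq_right (le_trans (by linarith) (le_max_left _ _))
  have key2 : ∀ r : ℝ, (0:ℝ) < min (max (3*r-1) 0) 1 → min (3*r) 1 = 1 := by
    intro r h
    have h1 : 0 < max (3*r-1) 0 := lt_of_lt_of_le h (min_le_left _ _)
    have h2 : 0 < 3*r-1 := by
      rcases le_or_gt (3*r-1) 0 with h' | h'
      · rw [max_eq_right h'] at h1; linarith
      · exact h'
    exact min_eq_right (by linarith)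
  have keyb : ∀ r : ℝ, xb < xb * min (3*r) 1 + (1-xb) * max (3*r-2) 0 →
      0 < max (3*r-2) 0 := by
    intro r hgt
    by_contra h
    push_neg at h
    have h0 : max (3*r-2) 0 = 0 := le_antisymm h (le_max_right _ _)
    rw [h0] at hgt
    have h1 : min (3*r) 1 ≤ 1 := min_le_right _ _
    nlinarith
  -- coordinate values
  have pvb : ∀ t : unitInterval, p t b
      = xb * min (3*(t:ℝ)) 1 + (1-xb) * max (3*(t:ℝ)-2) 0 := by
    intro t; simp [hp]
  have pva : ∀ t : unitInterval, p t a = min (max (3*(t:ℝ)-1) 0) 1 := by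
    intro t; simp [hp, hab]
  have pvo : ∀ t : unitInterval, ∀ j, j ≠ a → j ≠ b → p t j = max (3*(t:ℝ)-2) 0 := by
    intro t j hja hjb; simp [hp, hja, hjb]
  refine ⟨p, ⟨?_, ?_, ?_⟩, ?_, ?_⟩
  · apply continuous_pi; intro j
    by_cases hjb : j = b
    · subst hjb
      simp only [pvb]
      fun_prop
    · by_cases hja : j = a
      · subst hja
        simp only [pva]
        fun_prop
      · simp only [pvo _ j hja hjb]
        fun_prop
  · intro t
    have hr0 : (0:ℝ) ≤ (t:ℝ) := t.2.1
    have hr1 : (t:ℝ) ≤ 1 := t.2.2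
    have hu0 : (0:ℝ) ≤ min (3*(t:ℝ)) 1 := le_min (by linarith) zero_le_one
    have hu1 : min (3*(t:ℝ)) 1 ≤ 1 := min_le_right _ _
    have hv0 : (0:ℝ) ≤ max (3*(t:ℝ)-2) 0 := le_max_right _ _
    have hv1 : max (3*(t:ℝ)-2) 0 ≤ 1 := max_le (by linarith) zero_le_one
    have hw0 : (0:ℝ) ≤ min (max (3*(t:ℝ)-1) 0) 1 := le_min (le_max_right _ _) zero_le_one
    have hw1 : min (max (3*(t:ℝ)-1) 0) 1 ≤ 1 := min_le_right _ _
    rw [mem_XM_iff]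
    constructor
    · intro j
      by_cases hjb : j = b
      · subst hjb
        rw [pvb t]
        constructor
        · nlinarith
        · nlinarith
      · by_cases hja : j = a
        · subst hja; rw [pva t]; exact ⟨hw0, hw1⟩
        · rw [pvo t j hja hjb]; exact ⟨hv0, hv1⟩
    · intro i j2 hM2
      have hi := huniq i j2 hM2
      subst hi
      apply not_mem_extHole
      by_cases hjb : j2 = b
      · subst hjb
        rcases le_or_gt (p t j2) (x (ι j2) j2) with h | h
        · exact Or.inl h
        · refine Or.inr (Or.inr ⟨a, hab, ?_⟩)
          have hvpos := keyb (t:ℝ) (by rw [pvb t] at h; exact h)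
          rw [pva t, key1 _ hvpos]
          exact (hy1 _ _).le
      · by_cases hja : j2 = a
        · subst hja
          rcases le_or_gt (p t j2) (x (ι j2) j2) with h | h
          · exact Or.inl h
          · refine Or.inr (Or.inr ⟨b, Ne.symm hab, ?_⟩)
            have hwpos : (0:ℝ) < min (max (3*(t:ℝ)-1) 0) 1 := by
              rw [pva t] at h
              exact lt_of_le_of_lt (hx _ _).le h
            have hu := key2 (t:ℝ) hwpos
            rw [pvb t, hu]
            nlinarith
        · rcases le_or_gt (p t j2) (x (ι j2) j2) with h | h
          · exact Or.inl h
          · refine Or.inr (Or.inr ⟨a, fun hc => hja hc.symm, ?_⟩)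
            have hvpos : (0:ℝ) < max (3*(t:ℝ)-2) 0 := by
              rw [pvo t j2 hja hjb] at h
              exact lt_of_le_of_lt (hx _ _).le h
            rw [pva t, key1 _ hvpos]
            exact (hy1 _ _).le
  · intro j
    intro t t' htt'
    show p t j ≤ p t' j
    have hr : (t:ℝ) ≤ (t':ℝ) := htt'
    have hmin : min (3*(t:ℝ)) 1 ≤ min (3*(t':ℝ)) 1 := min_le_min (by linarith) le_rfl
    have hmax : max (3*(t:ℝ)-2) 0 ≤ max (3*(t':ℝ)-2) 0 := max_le_max (by linarith) le_rfl
    by_cases hjb : j = b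
    · subst hjb
      rw [pvb t, pvb t']
      nlinarith
    · by_cases hja : j = a
      · subst hja
        rw [pva t, pva t']
        exact min_le_min (max_le_max (by linarith) le_rfl) le_rfl
      · rw [pvo t j hja hjb, pvo t' j hja hjb]
        exact hmax
  · funext j
    have h0 : ((0:unitInterval):ℝ) = 0 := rfl
    by_cases hjb : j = b
    · subst hjb; rw [pvb 0, h0]; norm_num
    · by_cases hja : j = a
      · subst hja; rw [pva 0, h0]; norm_num
      · rw [pvo 0 j hja hjb, h0]; norm_num
  · funext j
    have h1 : ((1:unitInterval):ℝ) = 1 := rfl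
    by_cases hjb : j = b
    · subst hjb; rw [pvb 1, h1]; norm_num
    · by_cases hja : j = a
      · subst hja; rw [pva 1, h1]; norm_num
      · rw [pvo 1 j hja hjb, h1]; norm_num
end Aux

theorem stmt8 {l n : ℕ} (hn : 1 ≤ n) (hl : 1 ≤ l)
    (x y : Fin l → Fin n → ℝ)
    (hx : ∀ i j, 0 < x i j) (hxy : ∀ i j, x i j < y i j) (hy1 : ∀ i j, y i j < 1)
    (M : Fin l → Fin n → Bool) (hM : ColUnit M) :
    Dead x y M ↔
      ∃ z ∈ XM x y M, z ≠ (fun _ => (1:ℝ)) ∧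
        ∀ p, IsDiPath n (XM x y M) p → p 0 = z → ∀ t, p t = z := by
  classical
  set ι : Fin n → Fin l := fun j => (hM j).choose with hιdef
  have hι : ∀ j, M (ι j) j = true := fun j => (hM j).choose_spec.1
  have huniq : ∀ i j, M i j = true → i = ι j := fun i j h => (hM j).choose_spec.2 i h
  have hx1 : ∀ i j, x i j < 1 := fun i j => (hxy i j).trans (hy1 i j)
  set j0 : Fin n := ⟨0, hn⟩ with hj0def
  by_cases hC : ∀ j j' : Fin n, j' ≠ j → x (ι j') j' < y (ι j) j'
  · constructor
    · intro _
      refine ⟨fun j => x (ι j) j, ?_, ?_, ?_⟩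
      · rw [mem_XM_iff]
        refine ⟨fun j => ⟨(hx _ _).le, (hx1 _ _).le⟩, ?_⟩
        intro i j hij hmem
        have hi := huniq i j hij
        rw [hi] at hmem
        exact absurd hmem.1.1 (lt_irrefl _)
      · intro h
        exact absurd (congrFun h j0) (ne_of_lt (hx1 _ _))
      · intro p hp hp0 t
        have h0 : ∀ j, p 0 j ≤ x (ι j) j := fun j => (congrFun hp0 j).le
        have hst := stuck_lemma hxy ι hι hC p hp h0
        funext j
        refine le_antisymm (hst t j) ?_
        have hmo : p 0 j ≤ p t j := hp.2.2 j (unitInterval.nonneg' : (0:unitInterval) ≤ t)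
        rwa [show p 0 j = x (ι j) j from congrFun hp0 j] at hmo
    · rintro - ⟨p, hp, hp0, hp1⟩
      have hst := stuck_lemma hxy ι hι hC p hp
        (fun j => by rw [hp0]; exact (hx _ _).le)
      have h := hst 1 j0
      rw [hp1] at h
      exact absurd h (not_le.2 (hx1 _ _))
  · push_neg at hC
    obtain ⟨jA, jB, hne, hge⟩ := hC
    constructor
    · intro hdead
      exact absurd (path_exists hx hxy hy1 ι huniq jA jB (Ne.symm hne) hge) hdead
    · rintro ⟨z, hz, hz1, hzdl⟩
      exfalso
      have hzc := (mem_XM_iff.1 hz).1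
      obtain ⟨j1, hj1⟩ : ∃ j1, z j1 < 1 := by
        by_contra h
        push_neg at h
        exact hz1 (funext fun j => le_antisymm (hzc j).2 (h j))
      obtain ⟨j, ε, hε, h1, h2⟩ :
          ∃ j ε, 0 < ε ∧ z j + ε ≤ 1 ∧ ∀ i, M i j = true →
            z j + ε ≤ x i j ∨ y i j ≤ z j ∨ ∃ j', j' ≠ j ∧ y i j' ≤ z j' := by
        by_cases hone : ∃ jo, z jo = 1
        · obtain ⟨jo, hjo⟩ := hone
          refine ⟨j1, 1 - z j1, by linarith, by linarith, fun i _ => Or.inr (Or.inr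
            ⟨jo, fun h => by rw [h] at hjo; exact absurd hjo (ne_of_lt hj1), ?_⟩)⟩
          rw [hjo]
          exact (hy1 _ _).le
        · push_neg at hone
          have hlt1 : ∀ j, z j < 1 := fun j => lt_of_le_of_ne (hzc j).2 (hone j)
          by_cases hallx : ∀ j, z j = x (ι j) j
          · refine ⟨jA, 1 - z jA, by linarith [hlt1 jA], by linarith, ?_⟩
            intro i hi
            rw [huniq i jA hi]
            refine Or.inr (Or.inr ⟨jB, hne, ?_⟩)
            rw [hallx jB]
            exact hge
          · push_neg at hallx
            obtain ⟨j, hj⟩ := hallx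
            rcases lt_trichotomy (z j) (x (ι j) j) with h | h | h
            · refine ⟨j, x (ι j) j - z j, by linarith, by linarith [hx1 (ι j) j], ?_⟩
              intro i hi
              rw [huniq i j hi]
              exact Or.inl (by linarith)
            · exact absurd h hj
            · rcases le_or_gt (y (ι j) j) (z j) with h' | h'
              · refine ⟨j, 1 - z j, by linarith [hlt1 j], by linarith, ?_⟩
                intro i hi
                rw [huniq i j hi]
                exact Or.inr (Or.inl h')
              · obtain ⟨j', hj', hy'⟩ := XM_block hz (ι j) j (hι j) h h'
                refine ⟨j, 1 - z j, by linarith [hlt1 j], by linarith, ?_⟩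
                intro i hi
                rw [huniq i j hi]
                exact Or.inr (Or.inr ⟨j', hj', hy'⟩)
      obtain ⟨p, hp, hp0, hp1⟩ := move_lemma z hz j ε hε h1 h2
      exact hp1 (congrFun (hzdl p hp hp0 1) j)
end

section
/- Let v ∈ ℕ^n with v_j ≥ 1 for all j, and let (M^w)_{0 ≤ w < v} be a family of matrices M^w ∈ 𝓜_{l,n} indexed by integer vectors w with 0 ≤ w_j < v_j for all j. If the delooped space Y associated to this family contains a directed path from (0,…,0) to v = (v_0,…,v_{n−1}), then every matrix M^w is alive, i.e., each X_{M^w} contains a total directed path. -/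
/-!
Retract the delooped space onto the cell indexed by `w`: clamp every coordinate `z j` into
`[w j, w j + 1]` and translate by `-w`. This map is continuous and monotone, sends `0` to `0` and
`v` to `1`, and maps `Y` into `X_{M^w}`. Indeed, if the clamped image of `z` lay in `R̃^i_j`, then
`0 < x^i_j` and `y^i_{j'} < 1` show that the clamping was inactive at the coordinates where it
matters, so `z` itself lies in the globally extended hole of the cell `w`.
-/

open Set

/-- The globally extended hole of the copy of `R̃^i_j` placed at the cell indexed by `w`. -/
def deloopHole {l n : ℕ} (x y : Fin l → Fin n → ℝ) (w : Fin n → ℕ)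
    (i : Fin l) (j : Fin n) : Set (Fin n → ℝ) :=
  {z | z j ∈ Ioo ((w j : ℝ) + x i j) ((w j : ℝ) + y i j) ∧
       ∀ j', j' ≠ j → z j' ∈ Ico (0:ℝ) ((w j' : ℝ) + y i j')}

/-- The delooped space associated to a family of matrices `Mf` indexed by cells `0 ≤ w < v`. -/
def deloopSpace {l n : ℕ} (x y : Fin l → Fin n → ℝ) (v : Fin n → ℕ)
    (Mf : (Fin n → ℕ) → Fin l → Fin n → Bool) : Set (Fin n → ℝ) :=
  {z | ∀ j, z j ∈ Icc (0:ℝ) (v j)} \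
    ⋃ (w : Fin n → ℕ) (_ : ∀ j, w j < v j) (i : Fin l) (j : Fin n)
      (_ : Mf w i j = true), deloopHole x y w i j

theorem lt_of_coe_projIcc_lt {α : Type*} [LinearOrder α] {a b c t : α} (h : a ≤ b)
    (hc : c ≤ b) (ht : (projIcc a b h t : α) < c) : t < c := by
  rw [coe_projIcc, max_lt_iff, min_lt_iff] at ht
  exact ht.2.resolve_left hc.not_gt

theorem lt_of_lt_coe_projIcc {α : Type*} [LinearOrder α] {a b c t : α} (h : a ≤ b)
    (hc : a ≤ c) (ht : c < (projIcc a b h t : α)) : c < t := by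
  rw [coe_projIcc, lt_max_iff, lt_min_iff] at ht
  exact (ht.resolve_left hc.not_gt).2

theorem IsDiPath.map {n m : ℕ} {Y : Set (Fin n → ℝ)} {Z : Set (Fin m → ℝ)}
    {p : unitInterval → Fin n → ℝ} (hp : IsDiPath n Y p)
    {f : (Fin n → ℝ) → Fin m → ℝ} (hfc : Continuous f) (hfm : Monotone f) (hf : MapsTo f Y Z) : IsDiPath m Z (f ∘ p) :=
  ⟨hfc.comp hp.1, fun t => hf (hp.2.1 t),
    monotone_iff_apply₂.1 (hfm.comp (monotone_iff_apply₂.2 hp.2.2))⟩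

noncomputable def cellRetract {n : ℕ} (w : Fin n → ℕ) (z : Fin n → ℝ) : Fin n → ℝ :=
  fun j => projIcc 0 1 zero_le_one (z j - w j)

section cellRetract

variable {n : ℕ} (w : Fin n → ℕ)

theorem continuous_cellRetract : Continuous (cellRetract w) := by
  unfold cellRetract
  fun_prop

theorem monotone_cellRetract : Monotone (cellRetract w) := fun _ _ h j =>
  monotone_projIcc zero_le_one (sub_le_sub_right (h j) _)

theorem cellRetract_mem_cube (z : Fin n → ℝ) : cellRetract w z ∈ cube n :=
  fun j => (projIcc 0 1 zero_le_one (z j - w j)).2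

theorem cellRetract_zero : cellRetract w 0 = 0 := by
  funext j
  simp [cellRetract, projIcc_of_le_left]

theorem cellRetract_eq_one_of_lt {v : Fin n → ℕ} (hw : ∀ j, w j < v j) :
    cellRetract w (fun j => (v j : ℝ)) = fun _ => 1 := by
  funext j
  have hwv : (w j : ℝ) + 1 ≤ v j := by exact_mod_cast hw j
  exact congrArg Subtype.val (projIcc_of_right_le zero_le_one (le_sub_iff_add_le'.2 hwv))

theorem mem_deloopHole_of_cellRetract_mem_extHole {l : ℕ} {x y : Fin l → Fin n → ℝ}
    (hx : ∀ i j, 0 < x i j) (hy1 : ∀ i j, y i j < 1) {z : Fin n → ℝ} (hz : ∀ j, 0 ≤ z j)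
    {i : Fin l} {j : Fin n} (h : cellRetract w z ∈ extHole x y i j) :
    z ∈ deloopHole x y w i j := by
  have below : ∀ j', cellRetract w z j' < y i j' → z j' < w j' + y i j' := fun j' h' => by
    linarith [lt_of_coe_projIcc_lt zero_le_one (hy1 i j').le h']
  refine ⟨⟨?_, below j h.1.2⟩, fun j' hj' => ⟨hz j', below j' (h.2 j' hj').2⟩⟩
  linarith [lt_of_lt_coe_projIcc zero_le_one (hx i j).le h.1.1]

theorem mapsTo_cellRetract_deloopSpace {l : ℕ} {x y : Fin l → Fin n → ℝ}
    (hx : ∀ i j, 0 < x i j) (hy1 : ∀ i j, y i j < 1) {v : Fin n → ℕ}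
    {Mf : (Fin n → ℕ) → Fin l → Fin n → Bool} (hw : ∀ j, w j < v j) :
    MapsTo (cellRetract w) (deloopSpace x y v Mf) (XM x y (Mf w)) := by
  rintro z ⟨hzbox, hzholes⟩
  refine ⟨cellRetract_mem_cube w z, fun hmem => hzholes ?_⟩
  simp only [mem_iUnion] at hmem ⊢
  obtain ⟨i, j, hM, hij⟩ := hmem
  exact ⟨w, hw, i, j, hM,
    mem_deloopHole_of_cellRetract_mem_extHole w hx hy1 (fun j' => (hzbox j').1) hij⟩

end cellRetract

theorem stmt9_general {l n : ℕ}
    (x y : Fin l → Fin n → ℝ)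
    (hx : ∀ i j, 0 < x i j) (hy1 : ∀ i j, y i j < 1)
    (v : Fin n → ℕ)
    (Mf : (Fin n → ℕ) → Fin l → Fin n → Bool)
    (hY : ∃ p : unitInterval → Fin n → ℝ,
      IsDiPath n (deloopSpace x y v Mf) p ∧
      p 0 = (fun _ => (0:ℝ)) ∧ p 1 = (fun j => (v j : ℝ))) :
    ∀ w : Fin n → ℕ, (∀ j, w j < v j) →
      ∃ q, IsTotalDiPath n (XM x y (Mf w)) q := by
  obtain ⟨p, hp, hp0, hp1⟩ := hY
  intro w hw
  refine ⟨cellRetract w ∘ p, hp.map (continuous_cellRetract w) (monotone_cellRetract w)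
    (mapsTo_cellRetract_deloopSpace w hx hy1 hw), ?_, ?_⟩
  · simp only [Function.comp_apply, hp0]
    exact cellRetract_zero w
  · simp only [Function.comp_apply, hp1]
    exact cellRetract_eq_one_of_lt w hw

theorem stmt9 {l n : ℕ} (hn : 1 ≤ n) (hl : 1 ≤ l)
    (x y : Fin l → Fin n → ℝ)
    (hx : ∀ i j, 0 < x i j) (hxy : ∀ i j, x i j < y i j) (hy1 : ∀ i j, y i j < 1)
    (v : Fin n → ℕ) (hv : ∀ j, 1 ≤ v j)
    (Mf : (Fin n → ℕ) → Fin l → Fin n → Bool)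
    (hY : ∃ p : unitInterval → Fin n → ℝ,
      IsDiPath n (deloopSpace x y v Mf) p ∧
      p 0 = (fun _ => (0:ℝ)) ∧ p 1 = (fun j => (v j : ℝ))) :
    ∀ w : Fin n → ℕ, (∀ j, w j < v j) →
      ∃ q, IsTotalDiPath n (XM x y (Mf w)) q :=
  stmt9_general x y hx hy1 v Mf hY
end
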